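/- arXiv:1410.1234 — 3 statements merged into one kernel-verified Lean document; each statement's English description precedes it below -/
import Mathlib

section
/- Let m : (0, r₊) → ℝ be continuously differentiable with m'(r) = 4π r² ρ(r), where ρ is continuous on (0, r₊] with ρ(r₊) = 0, and suppose 1 − 2G m(r)/(c² r) > 0 for all r ∈ (0, r₊). If additionally m(r) → m₊ as r → r₊⁻ with 2G m₊/(c² r₊) = 1, then the function f(r) = 1 − 2G m(r)/(c² r) satisfies f'(r) → 1/r₊ as r → r₊⁻, which contradicts f > 0 on (0, r₊) and f(r₊) = 0. Hence κ := 1 − 2G m₊/(c² r₊) > 0. -/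
/-!
Write `f r = 1 - k m(r)/r` with `k = 2G/c²`. Since `m' = 4π r² ρ`, `f' = -k (4π r ρ - m/r²)`, and as
`r → r₊⁻` the density term vanishes, so `f' → k m₊/r₊²`. If the surface were at the Schwarzschild
radius, `k m₊ = r₊`, this limit is `1/r₊ > 0`: `f` is strictly increasing just below `r₊` and tends
to `0` there, so it is negative there, against `f > 0`. Hence `κ = lim f ≥ 0` cannot vanish.
-/

open Filter Topology Set

theorem eventually_lt_of_tendsto_nhdsLT_of_deriv_pos {f : ℝ → ℝ} {b l : ℝ}
    (hdiff : ∀ᶠ x in 𝓝[<] b, DifferentiableAt ℝ f x) (hpos : ∀ᶠ x in 𝓝[<] b, 0 < deriv f x)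
    (hf : Tendsto f (𝓝[<] b) (𝓝 l)) : ∀ᶠ x in 𝓝[<] b, f x < l := by
  obtain ⟨a, hab, hsub⟩ := mem_nhdsLT_iff_exists_Ioo_subset.mp (hdiff.and hpos)
  have hmono : StrictMonoOn f (Ioo a b) :=
    strictMonoOn_of_deriv_pos (convex_Ioo a b)
      (fun x hx => (hsub hx).1.continuousAt.continuousWithinAt)
      (fun x hx => (hsub (interior_subset hx)).2)
  filter_upwards [Ioo_mem_nhdsLT hab] with x hx
  obtain ⟨y, hxy, hyb⟩ := exists_between hx.2
  have hy : y ∈ Ioo a b := ⟨hx.1.trans hxy, hyb⟩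
  have hle : ∀ᶠ z in 𝓝[<] b, f y ≤ f z := by
    filter_upwards [Ioo_mem_nhdsLT hyb] with z hz
    exact (hmono hy ⟨hy.1.trans hz.1, hz.2⟩ hz.1).le
  calc f x < f y := hmono hx hy hxy
    _ ≤ l := ge_of_tendsto hf hle

theorem hasDerivAt_one_sub_mul_div_self (k : ℝ) {m : ℝ → ℝ} {m' r : ℝ} (hm : HasDerivAt m m' r)
    (hr : r ≠ 0) : HasDerivAt (fun x => 1 - k * (m x / x)) (-k * (m' / r - m r / r ^ 2)) r :=
  (((hm.div (hasDerivAt_id' r) hr).const_mul k).const_sub 1).congr_deriv (by field_simp)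

theorem tendsto_deriv_one_sub_mul_div_self_nhdsLT (k : ℝ) {m ρ : ℝ → ℝ} {rp mp : ℝ} (hr : 0 < rp)
    (hm : ∀ r ∈ Ioo 0 rp, HasDerivAt m (4 * Real.pi * r ^ 2 * ρ r) r)
    (hρ : Tendsto ρ (𝓝[<] rp) (𝓝 0)) (hmp : Tendsto m (𝓝[<] rp) (𝓝 mp)) :
    Tendsto (deriv fun x => 1 - k * (m x / x)) (𝓝[<] rp) (𝓝 (k * mp / rp ^ 2)) := by
  have hid : Tendsto (fun r : ℝ => r) (𝓝[<] rp) (𝓝 rp) :=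
    tendsto_nhdsWithin_of_tendsto_nhds tendsto_id
  have hlim : Tendsto (fun r => -k * (4 * Real.pi * r ^ 2 * ρ r / r - m r / r ^ 2)) (𝓝[<] rp)
      (𝓝 (-k * (4 * Real.pi * rp ^ 2 * 0 / rp - mp / rp ^ 2))) :=
    ((((tendsto_const_nhds.mul (hid.pow 2)).mul hρ).div hid hr.ne').sub
      (hmp.div (hid.pow 2) (pow_ne_zero 2 hr.ne'))).const_mul (-k)
  rw [show -k * (4 * Real.pi * rp ^ 2 * 0 / rp - mp / rp ^ 2) = k * mp / rp ^ 2 by ring] at hlim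
  refine hlim.congr' ?_
  filter_upwards [Ioo_mem_nhdsLT hr] with r hr'
  exact ((hasDerivAt_one_sub_mul_div_self k (hm r hr') hr'.1.ne').deriv).symm

theorem kappa_positive_general (G c rp mp : ℝ) (hr : 0 < rp)
    (m ρ : ℝ → ℝ)
    (hm : ∀ r ∈ Set.Ioo 0 rp, HasDerivAt m (4 * Real.pi * r ^ 2 * ρ r) r)
    (hρ : ContinuousOn ρ (Set.Ioc 0 rp)) (hρp : ρ rp = 0)
    (hf : ∀ r ∈ Set.Ioo 0 rp, 0 < 1 - 2 * G * m r / (c ^ 2 * r))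
    (hmp : Tendsto m (nhdsWithin rp (Set.Iio rp)) (nhds mp)) :
    (2 * G * mp / (c ^ 2 * rp) = 1 →
        Tendsto (deriv fun r => 1 - 2 * G * m r / (c ^ 2 * r))
          (nhdsWithin rp (Set.Iio rp)) (nhds (1 / rp)) ∧ False) ∧
      0 < 1 - 2 * G * mp / (c ^ 2 * rp) := by
  set k := 2 * G / c ^ 2
  have hfk : (fun r => 1 - 2 * G * m r / (c ^ 2 * r)) = fun r => 1 - k * (m r / r) := by
    funext r; rw [mul_div_mul_comm]
  have hfpos : ∀ᶠ r in 𝓝[<] rp, 0 < 1 - k * (m r / r) := by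
    filter_upwards [Ioo_mem_nhdsLT hr] with r hr'
    exact congrFun hfk r ▸ hf r hr'
  have hflim : Tendsto (fun r => 1 - k * (m r / r)) (𝓝[<] rp) (𝓝 (1 - k * (mp / rp))) :=
    tendsto_const_nhds.sub
      ((hmp.div (tendsto_nhdsWithin_of_tendsto_nhds tendsto_id) hr.ne').const_mul k)
  have hρ0 : Tendsto ρ (𝓝[<] rp) (𝓝 0) :=
    hρp ▸ (hρ rp ⟨hr, le_rfl⟩).tendsto.mono_left (nhdsWithin_le_of_mem (Ioc_mem_nhdsLT hr))
  have horizon : k * (mp / rp) = 1 →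
      Tendsto (deriv fun r => 1 - k * (m r / r)) (𝓝[<] rp) (𝓝 (1 / rp)) ∧ False := by
    intro h
    have hderiv : Tendsto (deriv fun r => 1 - k * (m r / r)) (𝓝[<] rp) (𝓝 (1 / rp)) := by
      convert tendsto_deriv_one_sub_mul_div_self_nhdsLT k hr hm hρ0 hmp using 2
      rw [← h]; field_simp
    have hdiff : ∀ᶠ r in 𝓝[<] rp, DifferentiableAt ℝ (fun r => 1 - k * (m r / r)) r := by
      filter_upwards [Ioo_mem_nhdsLT hr] with r hr'
      exact (hasDerivAt_one_sub_mul_div_self k (hm r hr') hr'.1.ne').differentiableAt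
    have hneg := eventually_lt_of_tendsto_nhdsLT_of_deriv_pos hdiff
      (hderiv.eventually (eventually_gt_nhds (one_div_pos.2 hr))) (by rwa [h, sub_self] at hflim)
    obtain ⟨r, hr_neg, hr_pos⟩ := (hneg.and hfpos).exists
    exact ⟨hderiv, hr_neg.not_gt hr_pos⟩
  rw [hfk, mul_div_mul_comm]
  refine ⟨horizon, (ge_of_tendsto hflim (hfpos.mono fun _ => le_of_lt)).lt_of_ne ?_⟩
  intro hκ
  exact (horizon (by linarith)).2

theorem kappa_positive (G c rp mp : ℝ) (hG : 0 < G) (hc : 0 < c) (hr : 0 < rp)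
    (m ρ : ℝ → ℝ)
    (hm : ∀ r ∈ Set.Ioo 0 rp, HasDerivAt m (4 * Real.pi * r ^ 2 * ρ r) r)
    (hρ : ContinuousOn ρ (Set.Ioc 0 rp)) (hρp : ρ rp = 0)
    (hf : ∀ r ∈ Set.Ioo 0 rp, 0 < 1 - 2 * G * m r / (c ^ 2 * r))
    (hmp : Tendsto m (nhdsWithin rp (Set.Iio rp)) (nhds mp)) :
    (2 * G * mp / (c ^ 2 * rp) = 1 →
        Tendsto (deriv fun r => 1 - 2 * G * m r / (c ^ 2 * r))
          (nhdsWithin rp (Set.Iio rp)) (nhds (1 / rp)) ∧ False) ∧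
      0 < 1 - 2 * G * mp / (c ^ 2 * rp) :=
  kappa_positive_general G c rp mp hr m ρ hm hρ hρp hf hmp
end

section
/- Let x(r) satisfy r dx/dr = α − x + x²G̃ on (r₀, r₊) with α ≥ 0 and G̃ ≥ G > 0 constants (lower bounds). If x(r₀) > 1/G, then x(r) > 1/G for all r ∈ (r₀, r₊), x is increasing, and the maximal interval of existence satisfies r₊ < r₀·exp(1/(G·x(r₀) − 1)). -/
open Real

private lemma riccati_num_pos {α G Gt v : ℝ} (hα : 0 ≤ α) (hG : 0 < G) (hGt : G ≤ Gt)
    (hv : 1 / G < v) : 0 < α - v + v ^ 2 * Gt := by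
  have hv1 : 1 < v * G := (div_lt_iff₀ hG).mp hv
  have hv0 : 0 < v := lt_trans (by positivity) hv
  nlinarith [mul_pos hv0 (sub_pos.mpr hv1), mul_nonneg (sq_nonneg v) (sub_nonneg.mpr hGt)]

private lemma riccati_key {α G Gt v : ℝ} (hα : 0 ≤ α) (hG : 0 < G) (hGt : G ≤ Gt)
    (hv : 1 / G < v) : (G * v - 1) ^ 2 < G * (α - v + v ^ 2 * Gt) := by
  have hv1 : 1 < v * G := (div_lt_iff₀ hG).mp hv
  have hv0 : 0 < v := lt_trans (by positivity) hv
  nlinarith [mul_nonneg hG.le hα, mul_nonneg (mul_nonneg hG.le (sq_nonneg v)) (sub_nonneg.mpr hGt)]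

theorem radius_bound_riccati (r₀ rp α G Gt : ℝ) (hr₀ : 0 < r₀) (hr : r₀ < rp)
    (hα : 0 ≤ α) (hG : 0 < G) (hGt : G ≤ Gt) (x : ℝ → ℝ)
    (hx : ∀ r ∈ Set.Ico r₀ rp, HasDerivAt x ((α - x r + x r ^ 2 * Gt) / r) r)
    (hx0 : 1 / G < x r₀) :
    (∀ r ∈ Set.Ioo r₀ rp, 1 / G < x r) ∧
      StrictMonoOn x (Set.Ico r₀ rp) ∧
      rp < r₀ * Real.exp (1 / (G * x r₀ - 1)) := by
  have hpos : ∀ r ∈ Set.Ico r₀ rp, (0 : ℝ) < r := fun r hr' => lt_of_lt_of_le hr₀ hr'.1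
  have hcont : ContinuousOn x (Set.Ico r₀ rp) :=
    fun r hr' => ((hx r hr').continuousAt).continuousWithinAt
  -- Part 1: invariance of {x > 1/G}
  have hxG : ∀ r ∈ Set.Ico r₀ rp, 1 / G < x r := by
    by_contra h
    push_neg at h
    obtain ⟨r₁, hr₁, hxr₁⟩ := h
    set B : Set ℝ := {r | r ∈ Set.Ico r₀ rp ∧ x r ≤ 1 / G} with hBdef
    have hBne : B.Nonempty := ⟨r₁, hr₁, hxr₁⟩
    have hBbd : BddBelow B := ⟨r₀, fun r hr' => hr'.1.1⟩
    set s := sInf B with hsdef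
    have hs_le : s ≤ r₁ := csInf_le hBbd ⟨hr₁, hxr₁⟩
    have hr₀s : r₀ ≤ s := le_csInf hBne (fun r hr' => hr'.1.1)
    have hsIco : s ∈ Set.Ico r₀ rp := ⟨hr₀s, lt_of_le_of_lt hs_le hr₁.2⟩
    have hxs : x s ≤ 1 / G := by
      have h1 : s ∈ closure B := csInf_mem_closure hBne hBbd
      have h2 : (nhdsWithin s B).NeBot := mem_closure_iff_nhdsWithin_neBot.mp h1
      have h3 : Filter.Tendsto x (nhdsWithin s B) (nhds (x s)) :=
        ((hx s hsIco).continuousAt.tendsto).mono_left nhdsWithin_le_nhds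
      refine le_of_tendsto h3 ?_
      exact Filter.eventually_of_mem self_mem_nhdsWithin (fun r hr' => hr'.2)
    have hbefore : ∀ r ∈ Set.Ico r₀ s, 1 / G < x r := by
      intro r hr'
      by_contra hle
      push_neg at hle
      have hrB : r ∈ B := ⟨⟨hr'.1, lt_trans hr'.2 hsIco.2⟩, hle⟩
      exact absurd (csInf_le hBbd hrB) (not_le.mpr hr'.2)
    rcases eq_or_lt_of_le hr₀s with heq | hlt
    · exact absurd hxs (not_le.mpr (heq ▸ hx0))
    · have hsub : Set.Icc r₀ s ⊆ Set.Ico r₀ rp :=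
        fun r hr' => ⟨hr'.1, lt_of_le_of_lt hr'.2 hsIco.2⟩
      have hmono : StrictMonoOn x (Set.Icc r₀ s) := by
        apply strictMonoOn_of_deriv_pos (convex_Icc _ _) (hcont.mono hsub)
        intro r hr'
        rw [interior_Icc] at hr'
        have hrI : r ∈ Set.Ico r₀ rp := ⟨hr'.1.le, lt_trans hr'.2 hsIco.2⟩
        rw [(hx r hrI).deriv]
        exact div_pos (riccati_num_pos hα hG hGt (hbefore r ⟨hr'.1.le, hr'.2⟩)) (hpos r hrI)
      have hxx : x r₀ < x s :=
        hmono (Set.left_mem_Icc.mpr hr₀s) (Set.right_mem_Icc.mpr hr₀s) hlt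
      linarith
  -- Part 2: strict monotonicity
  have hmono : StrictMonoOn x (Set.Ico r₀ rp) := by
    apply strictMonoOn_of_deriv_pos (convex_Ico _ _) hcont
    intro r hr'
    rw [interior_Ico] at hr'
    have hrI : r ∈ Set.Ico r₀ rp := ⟨hr'.1.le, hr'.2⟩
    rw [(hx r hrI).deriv]
    exact div_pos (riccati_num_pos hα hG hGt (hxG r hrI)) (hpos r hrI)
  refine ⟨fun r hr' => hxG r ⟨hr'.1.le, hr'.2⟩, hmono, ?_⟩
  -- Part 3: radius bound via w = (G x - 1)⁻¹ + log r strictly decreasing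
  set w : ℝ → ℝ := fun r => (G * x r - 1)⁻¹ + Real.log r with hwdef
  have hden : ∀ r ∈ Set.Ico r₀ rp, 0 < G * x r - 1 := by
    intro r hr'
    have := hxG r hr'
    have h1 : 1 < x r * G := (div_lt_iff₀ hG).mp this
    linarith [mul_comm (x r) G ▸ h1]
  have hw : ∀ r ∈ Set.Ico r₀ rp,
      HasDerivAt w
        (-(G * ((α - x r + x r ^ 2 * Gt) / r)) / (G * x r - 1) ^ 2 + r⁻¹) r := by
    intro r hr'
    have h1 : HasDerivAt (fun r => G * x r - 1) (G * ((α - x r + x r ^ 2 * Gt) / r)) r :=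
      ((hx r hr').const_mul G).sub_const 1
    have h2 : HasDerivAt (fun r => (G * x r - 1)⁻¹)
        (-(G * ((α - x r + x r ^ 2 * Gt) / r)) / (G * x r - 1) ^ 2) r :=
      h1.inv (ne_of_gt (hden r hr'))
    exact h2.add (Real.hasDerivAt_log (ne_of_gt (hpos r hr')))
  have hwanti : StrictAntiOn w (Set.Ico r₀ rp) := by
    apply strictAntiOn_of_deriv_neg (convex_Ico _ _)
      (fun r hr' => ((hw r hr').continuousAt).continuousWithinAt)
    intro r hr'
    rw [interior_Ico] at hr'
    have hrI : r ∈ Set.Ico r₀ rp := ⟨hr'.1.le, hr'.2⟩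
    rw [(hw r hrI).deriv]
    have hrpos := hpos r hrI
    have hd := hden r hrI
    have hk := riccati_key hα hG hGt (hxG r hrI)
    have heq : -(G * ((α - x r + x r ^ 2 * Gt) / r)) / (G * x r - 1) ^ 2 + r⁻¹ =
        ((G * x r - 1) ^ 2 - G * (α - x r + x r ^ 2 * Gt)) / (r * (G * x r - 1) ^ 2) := by
      field_simp
      ring
    rw [heq]
    exact div_neg_of_neg_of_pos (by linarith) (by positivity)
  -- log r < w r₁ for r in (r₁, rp), with r₁ the midpoint
  set r₁ := (r₀ + rp) / 2 with hr₁def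
  have hr₁mem : r₁ ∈ Set.Ico r₀ rp := ⟨by linarith, by linarith⟩
  have hlogr : ∀ r ∈ Set.Ioo r₁ rp, Real.log r < w r₁ := by
    intro r hr'
    have hrI : r ∈ Set.Ico r₀ rp := ⟨by linarith [hr'.1], hr'.2⟩
    have h1 : w r < w r₁ := hwanti hr₁mem hrI hr'.1
    have h2 : 0 < (G * x r - 1)⁻¹ := inv_pos.mpr (hden r hrI)
    have : Real.log r < w r := by simp only [hwdef]; linarith
    linarith
  have hrple : rp ≤ Real.exp (w r₁) := by
    by_contra hco
    push_neg at hco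
    set r := (max r₁ (Real.exp (w r₁)) + rp) / 2 with hrdef
    have hmax_lt : max r₁ (Real.exp (w r₁)) < rp := max_lt hr₁mem.2 hco
    have hr_lt_rp : r < rp := by
      simp only [hrdef]; linarith
    have hr_gt_r₁ : r₁ < r := by
      have := le_max_left r₁ (Real.exp (w r₁))
      simp only [hrdef]; linarith [hr₁mem.2]
    have hr_gt_e : Real.exp (w r₁) < r := by
      have := le_max_right r₁ (Real.exp (w r₁))
      simp only [hrdef]; linarith
    have hlog := hlogr r ⟨hr_gt_r₁, hr_lt_rp⟩
    have hrpos' : 0 < r := lt_trans hr₀ (lt_of_le_of_lt hr₁mem.1 hr_gt_r₁)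
    have : r < Real.exp (w r₁) := by
      calc r = Real.exp (Real.log r) := (Real.exp_log hrpos').symm
        _ < Real.exp (w r₁) := Real.exp_lt_exp.mpr hlog
    linarith
  have hw01 : w r₁ < w r₀ := hwanti ⟨le_rfl, hr⟩ hr₁mem (by simp only [hr₁def]; linarith)
  have hfin : Real.exp (w r₀) = r₀ * Real.exp (1 / (G * x r₀ - 1)) := by
    simp only [hwdef, Real.exp_add, Real.exp_log hr₀, one_div]
    ring
  calc rp ≤ Real.exp (w r₁) := hrple
    _ < Real.exp (w r₀) := Real.exp_lt_exp.mpr hw01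
    _ = r₀ * Real.exp (1 / (G * x r₀ - 1)) := hfin
end

section
/- Let f : ℝ → ℝ be the solution of the Riccati equation t df/dt = −f + G f² on t ≥ t₀ with f(t₀) = f₀ > 1/G, G > 0. Then f blows up to +∞ at some t* ≤ t₀ exp(1/(G f₀ − 1)). -/
open Real

theorem riccati_blow_up (t₀ T G f₀ : ℝ) (ht₀ : 0 < t₀) (hT : t₀ < T)
    (hG : 0 < G) (hf₀ : 1 / G < f₀) (f : ℝ → ℝ)
    (hf : ∀ t ∈ Set.Ico t₀ T, HasDerivAt f ((-f t + G * f t ^ 2) / t) t)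
    (hinit : f t₀ = f₀) :
    T ≤ t₀ * Real.exp (1 / (G * f₀ - 1)) := by
  have hh₀ : 0 < G * f₀ - 1 := by
    have h1 : 1 < f₀ * G := (div_lt_iff₀ hG).mp hf₀
    nlinarith
  obtain ⟨g, hgdef⟩ : ∃ g : ℝ → ℝ, ∀ t, g t = G * f t - 1 :=
    ⟨fun t => G * f t - 1, fun _ => rfl⟩
  have hgfun : g = fun t => G * f t - 1 := funext hgdef
  have hgt₀ : g t₀ = G * f₀ - 1 := by rw [hgdef, hinit]
  have hgderiv : ∀ t ∈ Set.Ico t₀ T,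
      HasDerivAt g (G * ((-f t + G * f t ^ 2) / t)) t := by
    intro t ht
    rw [hgfun]
    exact ((hf t ht).const_mul G).sub_const 1
  have hcont : ∀ t ∈ Set.Ico t₀ T, ContinuousAt g t := fun t ht =>
    (hgderiv t ht).continuousAt
  -- key monotonicity lemma
  have key : ∀ b, b ∈ Set.Ico t₀ T → t₀ < b → (∀ t ∈ Set.Icc t₀ b, 0 < g t) →
      (g b)⁻¹ + Real.log b < (G * f₀ - 1)⁻¹ + Real.log t₀ := by
    intro b hb htb hpos
    have hderiv : ∀ t ∈ Set.Icc t₀ b,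
        HasDerivAt (fun t => (g t)⁻¹ + Real.log t)
          (-(G * ((-f t + G * f t ^ 2) / t)) / (g t) ^ 2 + t⁻¹) t := by
      intro t ht
      have htmem : t ∈ Set.Ico t₀ T := ⟨ht.1, lt_of_le_of_lt ht.2 hb.2⟩
      have htpos : 0 < t := lt_of_lt_of_le ht₀ ht.1
      exact ((hgderiv t htmem).inv (ne_of_gt (hpos t ht))).add
        (Real.hasDerivAt_log htpos.ne')
    have hanti : StrictAntiOn (fun t => (g t)⁻¹ + Real.log t) (Set.Icc t₀ b) := by
      apply strictAntiOn_of_deriv_neg (convex_Icc t₀ b)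
      · intro t ht
        exact (hderiv t ht).continuousAt.continuousWithinAt
      · intro t ht
        rw [interior_Icc] at ht
        have ht' : t ∈ Set.Icc t₀ b := ⟨le_of_lt ht.1, le_of_lt ht.2⟩
        rw [(hderiv t ht').deriv]
        have hk : 0 < g t := hpos t ht'
        have htpos : 0 < t := lt_of_lt_of_le ht₀ ht'.1
        have hgz : g t ≠ 0 := hk.ne'
        have htz : t ≠ 0 := htpos.ne'
        have heq : -(G * ((-f t + G * f t ^ 2) / t)) / (g t) ^ 2 + t⁻¹
            = -((g t) * t)⁻¹ := by
          rw [hgdef]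
          have h1 : G * f t - 1 ≠ 0 := by rw [← hgdef]; exact hgz
          field_simp
          ring
        rw [heq]
        simp only [neg_lt, neg_zero, Left.neg_neg_iff]
        positivity
    have := hanti ⟨le_refl t₀, le_of_lt htb⟩ ⟨le_of_lt htb, le_refl b⟩ htb
    simp only at this
    rw [hgt₀] at this
    linarith
  -- invariance: g stays positive
  have inv : ∀ s ∈ Set.Ico t₀ T, ∀ t ∈ Set.Icc t₀ s, 0 < g t := by
    intro s hs
    by_contra hcon
    push_neg at hcon
    obtain ⟨u, hu, hgu⟩ := hcon
    set A : Set ℝ := {t ∈ Set.Icc t₀ s | g t ≤ (G * f₀ - 1) / 2} with hA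
    have hne : A.Nonempty := ⟨u, hu, by linarith⟩
    have hgoncont : ContinuousOn g (Set.Icc t₀ s) := by
      intro t ht
      exact (hcont t ⟨ht.1, lt_of_le_of_lt ht.2 hs.2⟩).continuousWithinAt
    have hclosed : IsClosed A := by
      have hAeq : A = Set.Icc t₀ s ∩ g ⁻¹' Set.Iic ((G * f₀ - 1) / 2) := by
        ext x; simp [hA, Set.mem_sep_iff]
      rw [hAeq]
      exact hgoncont.preimage_isClosed_of_isClosed isClosed_Icc isClosed_Iic
    have hbdd : BddBelow A := ⟨t₀, fun x hx => hx.1.1⟩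
    set t₁ := sInf A with ht₁def
    have ht₁A : t₁ ∈ A := hclosed.csInf_mem hne hbdd
    have ht₁Icc : t₁ ∈ Set.Icc t₀ s := ht₁A.1
    have ht₁g : g t₁ ≤ (G * f₀ - 1) / 2 := ht₁A.2
    have htgt : t₀ < t₁ := by
      rcases lt_or_eq_of_le ht₁Icc.1 with h | h
      · exact h
      · exfalso; rw [← h, hgt₀] at ht₁g; linarith
    have hposlt : ∀ t ∈ Set.Ico t₀ t₁, (G * f₀ - 1) / 2 < g t := by
      intro t ht
      by_contra hle
      push_neg at hle
      have htA : t ∈ A := ⟨⟨ht.1, le_trans (le_of_lt ht.2) ht₁Icc.2⟩, hle⟩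
      exact absurd (csInf_le hbdd htA) (not_le.mpr ht.2)
    have hgt₁ : (G * f₀ - 1) / 2 ≤ g t₁ := by
      have htend : Filter.Tendsto g (nhdsWithin t₁ (Set.Iio t₁)) (nhds (g t₁)) :=
        ((hcont t₁ ⟨ht₁Icc.1, lt_of_le_of_lt ht₁Icc.2 hs.2⟩).tendsto).mono_left
          nhdsWithin_le_nhds
      refine ge_of_tendsto htend ?_
      filter_upwards [Ioo_mem_nhdsLT_of_mem ⟨htgt, le_refl t₁⟩] with x hx
      exact le_of_lt (hposlt x ⟨le_of_lt hx.1, hx.2⟩)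
    have hpos : ∀ t ∈ Set.Icc t₀ t₁, 0 < g t := by
      intro t ht
      rcases lt_or_eq_of_le ht.2 with h | h
      · have := hposlt t ⟨ht.1, h⟩; linarith
      · rw [h]; linarith
    have hkey := key t₁ ⟨ht₁Icc.1, lt_of_le_of_lt ht₁Icc.2 hs.2⟩ htgt hpos
    have hloglt : Real.log t₀ < Real.log t₁ := Real.log_lt_log ht₀ htgt
    have hgpos : 0 < g t₁ := by linarith
    have hinv2 : ((G * f₀ - 1) / 2)⁻¹ ≤ (g t₁)⁻¹ := by
      rw [← one_div, ← one_div]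
      exact one_div_le_one_div_of_le hgpos ht₁g
    have hstrict : (G * f₀ - 1)⁻¹ < ((G * f₀ - 1) / 2)⁻¹ := by
      rw [← one_div, ← one_div]
      exact one_div_lt_one_div_of_lt (by linarith) (by linarith)
    linarith
  -- conclude
  apply le_of_forall_lt
  intro c hc
  have hexp1 : 1 < Real.exp (1 / (G * f₀ - 1)) := by
    have h0 : (0 : ℝ) < 1 / (G * f₀ - 1) := by positivity
    have := Real.exp_lt_exp.mpr h0
    rwa [Real.exp_zero] at this
  rcases lt_or_ge c t₀ with h | h
  · calc c < t₀ := h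
      _ = t₀ * 1 := (mul_one t₀).symm
      _ < t₀ * Real.exp (1 / (G * f₀ - 1)) := mul_lt_mul_of_pos_left hexp1 ht₀
  · rcases eq_or_lt_of_le h with h' | h'
    · calc c = t₀ := h'.symm
        _ = t₀ * 1 := (mul_one t₀).symm
        _ < t₀ * Real.exp (1 / (G * f₀ - 1)) := mul_lt_mul_of_pos_left hexp1 ht₀
    · have hcmem : c ∈ Set.Ico t₀ T := ⟨h, hc⟩
      have hpos := inv c hcmem
      have hkey := key c hcmem h' hpos
      have hgpos : 0 < g c := hpos c ⟨h, le_refl c⟩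
      have hginv : 0 < (g c)⁻¹ := inv_pos.mpr hgpos
      have hlog : Real.log c < (G * f₀ - 1)⁻¹ + Real.log t₀ := by linarith
      have hcpos : 0 < c := lt_trans ht₀ h'
      calc c = Real.exp (Real.log c) := (Real.exp_log hcpos).symm
        _ < Real.exp ((G * f₀ - 1)⁻¹ + Real.log t₀) := Real.exp_lt_exp.mpr hlog
        _ = t₀ * Real.exp (1 / (G * f₀ - 1)) := by
            rw [Real.exp_add, Real.exp_log ht₀, one_div, mul_comm]
end
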